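/- For every α, β, γ ∈ {−1, 1}: (i) a three-element subset of the configuration E_{α,β,γ} is collinear in ℙ²(ℝ) if and only if it is one of the twenty-one triples {V₁,S₁,S₅}, {V₁,S₂,S₁₄}, {V₁,S₃,S₆}, {V₁,S₄,S₉}, {V₁,S₇,S₈}, {V₁,S₁₀,S₁₁}, {V₁,S₁₂,S₁₃}, {V₂,S₁,S₄}, {V₂,S₂,S₁₁}, {V₂,S₃,S₇}, {V₂,S₅,S₁₃}, {V₂,S₆,S₈}, {V₂,S₉,S₁₀}, {V₂,S₁₂,S₁₄}, {V₃,S₁,S₈}, {V₃,S₂,S₃}, {V₃,S₄,S₁₀}, {V₃,S₅,S₁₂}, {V₃,S₆,S₇}, {V₃,S₉,S₁₁}, {V₃,S₁₃,S₁₄}; and (ii) every bijection f of E_{α,β,γ} preserving collinearity of triples in both directions satisfies f({V₁,V₂,V₃}) = {V₁,V₂,V₃}. -/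

import Mathlib

noncomputable section

/-- The real projective plane `ℙ²(ℝ)`. -/
abbrev ProjPlaneR := Projectivization ℝ (Fin 3 → ℝ)

/-- A vector `![a,b,c]` with a nonzero coordinate is nonzero. -/
theorem vne (a b c : ℝ) (i : Fin 3) (h : ![a, b, c] i ≠ 0) : ![a, b, c] ≠ 0 :=
  fun he => h (by rw [he]; simp)

/-- The point `(a : b : c)` of `ℙ²(ℝ)`. -/
def mkP (a b c : ℝ) (h : ![a, b, c] ≠ 0) : ProjPlaneR :=
  Projectivization.mk ℝ ![a, b, c] h

/-- A set of points of `ℙ²(ℝ)` lies on a common projective line iff some nonzero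
linear form vanishes on (representatives of) all of them. -/
def ProjCollinear (s : Set ProjPlaneR) : Prop :=
  ∃ f : (Fin 3 → ℝ) →ₗ[ℝ] ℝ, f ≠ 0 ∧ ∀ p ∈ s, f p.rep = 0

/-! The points of the configuration `E_{α,β,γ}`. -/

def V₁ : ProjPlaneR := mkP 0 0 1 (vne _ _ _ 2 (by simp))
def V₂ : ProjPlaneR := mkP 1 0 0 (vne _ _ _ 0 (by norm_num))
def V₃ : ProjPlaneR := mkP 0 1 0 (vne _ _ _ 1 (by norm_num))
def S₁ : ProjPlaneR := mkP 1 2 1 (vne _ _ _ 0 (by norm_num))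
def S₂ : ProjPlaneR := mkP 2 1 1 (vne _ _ _ 0 (by norm_num))
def S₃ : ProjPlaneR := mkP 2 (-4) 1 (vne _ _ _ 0 (by norm_num))
def S₄ : ProjPlaneR := mkP (-4) 2 1 (vne _ _ _ 0 (by norm_num))
def S₅ : ProjPlaneR := mkP 5 10 (-2) (vne _ _ _ 0 (by norm_num))
def S₆ (α : ℝ) : ProjPlaneR := mkP 2 (-4) (α * Real.sqrt 2) (vne _ _ _ 0 (by norm_num))
def S₇ (α : ℝ) : ProjPlaneR := mkP (α * Real.sqrt 2) (-4) 1 (vne _ _ _ 1 (by norm_num))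
def S₈ (α : ℝ) : ProjPlaneR := mkP 1 (-(2 * α * Real.sqrt 2)) 1 (vne _ _ _ 0 (by norm_num))
def S₉ (β : ℝ) : ProjPlaneR := mkP (-4) 2 (β * Real.sqrt 2) (vne _ _ _ 0 (by norm_num))
def S₁₀ (β : ℝ) : ProjPlaneR := mkP (-4) (β * Real.sqrt 2) 1 (vne _ _ _ 0 (by norm_num))
def S₁₁ (β : ℝ) : ProjPlaneR := mkP (-(2 * β * Real.sqrt 2)) 1 1 (vne _ _ _ 1 (by norm_num))
def S₁₂ (γ : ℝ) : ProjPlaneR := mkP 5 (5 * γ) (-2) (vne _ _ _ 0 (by norm_num))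
def S₁₃ (γ : ℝ) : ProjPlaneR := mkP (5 * γ) 5 (-1) (vne _ _ _ 1 (by norm_num))
def S₁₄ (γ : ℝ) : ProjPlaneR := mkP 10 5 (-(2 * γ)) (vne _ _ _ 0 (by norm_num))

/-- The configuration `E_{α,β,γ}` as a set of 17 points of `ℙ²(ℝ)`. -/
def Econf (α β γ : ℝ) : Set ProjPlaneR :=
  {V₁, V₂, V₃, S₁, S₂, S₃, S₄, S₅, S₆ α, S₇ α, S₈ α, S₉ β, S₁₀ β, S₁₁ β,
   S₁₂ γ, S₁₃ γ, S₁₄ γ}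

/-!
All coordinates of the configuration lie in `ℤ[√2]`, which embeds in `ℝ`; three points are
collinear iff the determinant of their coordinate vectors vanishes, and these determinants can be
computed exactly in `ℤ√2`. Running through the eight sign choices and the 680 triples of points
shows that the collinear triples are exactly the 21 listed ones.

Each of `V₁, V₂, V₃` lies on seven of the 21 lines and so is collinear with 14 other points, while
each `Sₙ` lies on three lines and is collinear with only 6. A bijection of `E_{α,β,γ}` preserving
collinearity preserves this number, hence permutes `{V₁, V₂, V₃}`.
-/

open Set Function
open Zsqrtd (sqrtd)

theorem Matrix.exists_dual_ne_zero_vanishing_on_rows_iff {K n : Type*} [Field K] [Fintype n]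
    [DecidableEq n] (v : n → n → K) :
    (∃ f : (n → K) →ₗ[K] K, f ≠ 0 ∧ ∀ i, f (v i) = 0) ↔ (Matrix.of v).det = 0 := by
  rw [← Matrix.exists_mulVec_eq_zero_iff]
  refine (dotProductEquiv K n).toEquiv.exists_congr_right.symm.trans ?_
  simp [funext_iff, Matrix.mulVec, dotProduct_comm]

theorem Projectivization.map_mk_rep_eq_zero_iff {K V : Type*} [DivisionRing K] [AddCommGroup V]
    [Module K V] (f : V →ₗ[K] K) {v : V} (hv : v ≠ 0) :
    f (Projectivization.mk K v hv).rep = 0 ↔ f v = 0 := by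
  obtain ⟨u, hu⟩ := Projectivization.exists_smul_eq_mk_rep K v hv
  rw [← hu, Units.smul_def, map_smul, smul_eq_mul, mul_eq_zero]
  simp [u.ne_zero]

theorem projCollinear_mk_iff {a b c : Fin 3 → ℝ} (ha : a ≠ 0) (hb : b ≠ 0) (hc : c ≠ 0) :
    ProjCollinear {Projectivization.mk ℝ a ha, Projectivization.mk ℝ b hb,
      Projectivization.mk ℝ c hc} ↔ (Matrix.of ![a, b, c]).det = 0 := by
  rw [← Matrix.exists_dual_ne_zero_vanishing_on_rows_iff]
  simp [ProjCollinear, Projectivization.map_mk_rep_eq_zero_iff, Fin.forall_fin_succ]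

theorem projCollinear_pair (p q : ProjPlaneR) : ProjCollinear {p, q} := by
  obtain ⟨f, hf, h⟩ := (Matrix.exists_dual_ne_zero_vanishing_on_rows_iff ![p.rep, q.rep, q.rep]).2
    (Matrix.det_zero_of_row_eq (i := 1) (j := 2) (by decide) rfl)
  refine ⟨f, hf, ?_⟩
  simpa [Fin.forall_fin_succ] using h

theorem forall_ne_of_forall_lt {α : Type*} [LinearOrder α] {P : α → α → α → Prop}
    (swap₁₂ : ∀ {a b c}, P a b c → P b a c) (swap₂₃ : ∀ {a b c}, P a b c → P a c b)
    (sorted : ∀ a b c, a < b → b < c → P a b c) :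
    ∀ a b c, a ≠ b → a ≠ c → b ≠ c → P a b c := by
  intro a b c hab hac hbc
  rcases hab.lt_or_gt with hab | hba <;> rcases hbc.lt_or_gt with hbc | hcb
  · exact sorted _ _ _ hab hbc
  · rcases hac.lt_or_gt with hac | hca
    · exact swap₂₃ (sorted _ _ _ hac hcb)
    · exact swap₂₃ (swap₁₂ (sorted _ _ _ hca hab))
  · rcases hac.lt_or_gt with hac | hca
    · exact swap₁₂ (sorted _ _ _ hba hac)
    · exact swap₁₂ (swap₂₃ (sorted _ _ _ hbc hca))
  · exact swap₁₂ (swap₂₃ (swap₁₂ (sorted _ _ _ hcb hba)))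

theorem Finset.triple_eq_iff_of_card_eq_three {α : Type*} [DecidableEq α] {s : Finset α}
    (hs : s.card = 3) {a b c : α} (hab : a ≠ b) (hac : a ≠ c) (hbc : b ≠ c) :
    {a, b, c} = s ↔ a ∈ s ∧ b ∈ s ∧ c ∈ s := by
  refine ⟨by rintro rfl; simp, fun h => Finset.eq_of_subset_of_card_le ?_ ?_⟩
  · simp [Finset.insert_subset_iff, h]
  · rw [hs, Finset.card_eq_three.2 ⟨a, b, c, hab, hac, hbc, rfl⟩]

theorem Function.Injective.exists_equiv_apply_eq {ι α : Type*} [Finite ι] {e : ι → α}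
    (he : Injective e) {f : α → α} (hmaps : MapsTo f (range e) (range e))
    (hinj : InjOn f (range e)) : ∃ σ : ι ≃ ι, ∀ i, f (e i) = e (σ i) := by
  choose σ hσ using fun i => hmaps (mem_range_self i)
  have hσinj : Injective σ := fun i j h =>
    he (hinj (mem_range_self i) (mem_range_self j) (by rw [← hσ, ← hσ, h]))
  exact ⟨Equiv.ofBijective σ hσinj.bijective_of_finite, fun i => (hσ i).symm⟩

open Finset in
theorem Equiv.card_filter_apply_eq {α : Type*} [Fintype α] {R : α → α → Prop} [DecidableRel R]
    (σ : α ≃ α) (hσ : ∀ a b, R (σ a) (σ b) ↔ R a b) (a : α) :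
    #{b | R (σ a) b} = #{b | R a b} := by
  simp only [← Fintype.card_subtype]
  exact Fintype.card_congr (σ.subtypeEquiv fun b => (hσ a b).symm).symm

theorem Int.exists_cast_eq_of_eq_one_or_eq_neg_one {R : Type*} [Ring R] {x : R}
    (hx : x = 1 ∨ x = -1) : ∃ a : ℤ, (a = 1 ∨ a = -1) ∧ (a : R) = x := by
  rcases hx with rfl | rfl
  exacts [⟨1, by simp⟩, ⟨-1, by simp⟩]

namespace Econf

/-- Index `i` is `V_{i+1}` for `i < 3` and `S_{i-2}` otherwise. -/
def point (α β γ : ℝ) : Fin 17 → ProjPlaneR :=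
  ![V₁, V₂, V₃, S₁, S₂, S₃, S₄, S₅, S₆ α, S₇ α, S₈ α, S₉ β, S₁₀ β, S₁₁ β, S₁₂ γ, S₁₃ γ, S₁₄ γ]

theorem range_point (α β γ : ℝ) : range (point α β γ) = Econf α β γ := by
  simp only [point, Matrix.range_cons, Matrix.range_empty, union_empty, singleton_union]
  rfl

theorem image_point_zero_one_two (α β γ : ℝ) : point α β γ '' {0, 1, 2} = {V₁, V₂, V₃} := by
  simp [image_insert_eq, point]

def coords (a b c : ℤ) : Fin 17 → Fin 3 → ℤ√2 :=
  ![![0, 0, 1], ![1, 0, 0], ![0, 1, 0], ![1, 2, 1], ![2, 1, 1], ![2, -4, 1], ![-4, 2, 1],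
    ![5, 10, -2],
    ![2, -4, (a : ℤ√2) * sqrtd], ![(a : ℤ√2) * sqrtd, -4, 1], ![1, -(2 * (a : ℤ√2) * sqrtd), 1],
    ![-4, 2, (b : ℤ√2) * sqrtd], ![-4, (b : ℤ√2) * sqrtd, 1], ![-(2 * (b : ℤ√2) * sqrtd), 1, 1],
    ![5, 5 * c, -2], ![5 * c, 5, -1], ![10, 5, -(2 * c)]]

def toReal : ℤ√2 →+* ℝ := Zsqrtd.toReal zero_le_two

theorem toReal_injective : Injective toReal :=
  Zsqrtd.toReal_injective _ fun n h => Int.sq_ne_two_mod_four n (by rw [← h]; rfl)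

theorem coords_ne_zero (a b c : ℤ) (i : Fin 17) : coords a b c i ≠ 0 := by
  fin_cases i <;> simp [coords, funext_iff, Fin.forall_fin_succ]

theorem toReal_comp_coords_ne_zero (a b c : ℤ) (i : Fin 17) : toReal ∘ coords a b c i ≠ 0 :=
  fun h => coords_ne_zero a b c i (funext fun t => toReal_injective (by simpa using congrFun h t))

theorem point_eq_mk (a b c : ℤ) (i : Fin 17) :
    point a b c i = Projectivization.mk ℝ _ (toReal_comp_coords_ne_zero a b c i) := by
  fin_cases i <;>
  · simp only [point, V₁, V₂, V₃, S₁, S₂, S₃, S₄, S₅, S₆, S₇, S₈, S₉, S₁₀, S₁₁, S₁₂, S₁₃, S₁₄, mkP,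
      Fin.reduceFinMk, Matrix.cons_val]
    congr 1
    ext t
    fin_cases t <;> simp [coords, toReal]

theorem det_toReal_comp (u v w : Fin 3 → ℤ√2) :
    (Matrix.of ![toReal ∘ u, toReal ∘ v, toReal ∘ w]).det = toReal (Matrix.of ![u, v, w]).det := by
  rw [RingHom.map_det]
  congr 1
  ext i j
  fin_cases i <;> rfl

def lines : List (Finset (Fin 17)) :=
  [{0, 3, 7}, {0, 4, 16}, {0, 5, 8}, {0, 6, 11}, {0, 9, 10}, {0, 12, 13}, {0, 14, 15},
   {1, 3, 6}, {1, 4, 13}, {1, 5, 9}, {1, 7, 15}, {1, 8, 10}, {1, 11, 12}, {1, 14, 16},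
   {2, 3, 10}, {2, 4, 5}, {2, 6, 12}, {2, 7, 14}, {2, 8, 9}, {2, 11, 13}, {2, 15, 16}]

theorem card_eq_three_of_mem_lines : ∀ L ∈ lines, L.card = 3 := by
  simp [lines]

def OnCommonLine (i j k : Fin 17) : Prop := ∃ L ∈ lines, i ∈ L ∧ j ∈ L ∧ k ∈ L

instance (i j k : Fin 17) : Decidable (OnCommonLine i j k) :=
  inferInstanceAs (Decidable (∃ L ∈ lines, _))

theorem onCommonLine_comm₁₂ {i j k : Fin 17} : OnCommonLine i j k ↔ OnCommonLine j i k := by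
  simp only [OnCommonLine, and_left_comm]

theorem onCommonLine_comm₂₃ {i j k : Fin 17} : OnCommonLine i j k ↔ OnCommonLine i k j := by
  simp only [OnCommonLine, and_comm]

theorem det_coords_eq_zero_iff :
    ∀ a ∈ [1, -1], ∀ b ∈ [1, -1], ∀ c ∈ [1, -1], ∀ i j k : Fin 17, i < j → j < k →
      ((Matrix.of ![coords a b c i, coords a b c j, coords a b c k]).det = 0 ↔
        OnCommonLine i j k) := by
  simp only [Matrix.det_fin_three]
  decide +kernel

theorem exists_not_onCommonLine :
    ∀ i j : Fin 17, i ≠ j → ∃ k, k ≠ i ∧ k ≠ j ∧ ¬OnCommonLine i j k := by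
  decide +kernel

def Joined (i j : Fin 17) : Prop := i ≠ j ∧ ∃ k, k ≠ i ∧ k ≠ j ∧ OnCommonLine i j k

instance : DecidableRel Joined := fun _ _ =>
  inferInstanceAs (Decidable (_ ∧ _))

open Finset in
theorem card_joined_eq_fourteen_iff :
    ∀ i : Fin 17, #{j | Joined i j} = 14 ↔ i = 0 ∨ i = 1 ∨ i = 2 := by
  decide +kernel

theorem joined_apply_iff (σ : Fin 17 ≃ Fin 17) (hσ : ∀ i j k, i ≠ j → i ≠ k → j ≠ k →
      (OnCommonLine (σ i) (σ j) (σ k) ↔ OnCommonLine i j k)) (i j : Fin 17) :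
    Joined (σ i) (σ j) ↔ Joined i j := by
  rw [Joined, Joined, σ.surjective.exists, σ.injective.ne_iff]
  refine and_congr_right fun hij => exists_congr fun k => ?_
  rw [σ.injective.ne_iff, σ.injective.ne_iff]
  exact and_congr_right fun hki => and_congr_right fun hkj => hσ i j k hij hki.symm hkj.symm

theorem image_zero_one_two_eq (σ : Fin 17 ≃ Fin 17) (hσ : ∀ i j, Joined (σ i) (σ j) ↔ Joined i j) :
    σ '' {0, 1, 2} = {0, 1, 2} := by
  ext j
  obtain ⟨i, rfl⟩ := σ.surjective j
  simp only [σ.injective.mem_set_image, mem_insert_iff, mem_singleton_iff,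
    ← card_joined_eq_fourteen_iff, σ.card_filter_apply_eq hσ]

variable {a b c : ℤ}

theorem projCollinear_point_iff (ha : a = 1 ∨ a = -1) (hb : b = 1 ∨ b = -1)
    (hc : c = 1 ∨ c = -1) {i j k : Fin 17} (hij : i ≠ j) (hik : i ≠ k) (hjk : j ≠ k) :
    ProjCollinear {point a b c i, point a b c j, point a b c k} ↔ OnCommonLine i j k := by
  refine forall_ne_of_forall_lt (P := fun i j k =>
    ProjCollinear {point a b c i, point a b c j, point a b c k} ↔ OnCommonLine i j k)
    (fun h => ?_) (fun h => ?_) (fun i j k hij hjk => ?_) i j k hij hik hjk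
  · rwa [insert_comm, ← onCommonLine_comm₁₂]
  · rwa [pair_comm, ← onCommonLine_comm₂₃]
  · rw [point_eq_mk, point_eq_mk, point_eq_mk, projCollinear_mk_iff, det_toReal_comp,
      map_eq_zero_iff _ toReal_injective]
    exact det_coords_eq_zero_iff a (by simpa using ha) b (by simpa using hb) c (by simpa using hc)
      _ _ _ hij hjk

/-- If `point i = point j`, every third point would be collinear with them, since any two points
are. -/
theorem point_injective (ha : a = 1 ∨ a = -1) (hb : b = 1 ∨ b = -1) (hc : c = 1 ∨ c = -1) :
    Injective (point a b c) := by
  intro i j hij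
  by_contra hne
  obtain ⟨k, hki, hkj, hk⟩ := exists_not_onCommonLine i j hne
  refine hk ((projCollinear_point_iff ha hb hc hne hki.symm hkj.symm).1 ?_)
  rw [hij, insert_eq_of_mem (mem_insert _ _)]
  exact projCollinear_pair _ _

theorem onCommonLine_iff_exists_image (ha : a = 1 ∨ a = -1) (hb : b = 1 ∨ b = -1)
    (hc : c = 1 ∨ c = -1) {i j k : Fin 17} (hij : i ≠ j) (hik : i ≠ k) (hjk : j ≠ k) :
    OnCommonLine i j k ↔
      ∃ L ∈ lines, {point a b c i, point a b c j, point a b c k} = point a b c '' L := by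
  have himage : ({point a b c i, point a b c j, point a b c k} : Set ProjPlaneR) =
      point a b c '' ↑({i, j, k} : Finset (Fin 17)) := by
    simp [image_insert_eq]
  simp only [OnCommonLine, himage, (image_injective.2 (point_injective ha hb hc)).eq_iff,
    Finset.coe_inj]
  exact exists_congr fun L => and_congr_right fun hL =>
    (Finset.triple_eq_iff_of_card_eq_three (card_eq_three_of_mem_lines L hL) hij hik hjk).symm

theorem image_triangle_eq_of_bijOn (ha : a = 1 ∨ a = -1) (hb : b = 1 ∨ b = -1)
    (hc : c = 1 ∨ c = -1) {f : ProjPlaneR → ProjPlaneR} (hf : BijOn f (Econf a b c) (Econf a b c))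
    (hcol : ∀ p ∈ Econf a b c, ∀ q ∈ Econf a b c, ∀ r ∈ Econf a b c,
      (ProjCollinear {p, q, r} ↔ ProjCollinear {f p, f q, f r})) :
    f '' {V₁, V₂, V₃} = {V₁, V₂, V₃} := by
  rw [← range_point] at hf hcol
  obtain ⟨σ, hfσ⟩ := (point_injective ha hb hc).exists_equiv_apply_eq hf.mapsTo hf.injOn
  have hline : ∀ i j k, i ≠ j → i ≠ k → j ≠ k →
      (OnCommonLine (σ i) (σ j) (σ k) ↔ OnCommonLine i j k) := fun i j k hij hik hjk => by
    rw [← projCollinear_point_iff ha hb hc hij hik hjk, ← projCollinear_point_iff ha hb hc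
      (σ.injective.ne hij) (σ.injective.ne hik) (σ.injective.ne hjk), ← hfσ, ← hfσ, ← hfσ]
    exact (hcol _ (mem_range_self i) _ (mem_range_self j) _ (mem_range_self k)).symm
  rw [← image_point_zero_one_two a b c, image_image]
  simp only [hfσ]
  rw [← image_image (point a b c) σ, image_zero_one_two_eq σ (joined_apply_iff σ hline)]

end Econf

/--
For `α, β, γ ∈ {−1,1}`:
(i) a three-element subset of `E_{α,β,γ}` is collinear in `ℙ²(ℝ)` iff it is one of the
twenty-one listed triples; and
(ii) every collinearity-preserving bijection `f` of `E_{α,β,γ}` satisfies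
`f({V₁,V₂,V₃}) = {V₁,V₂,V₃}`.
-/
theorem stmt_18 (α β γ : ℝ)
    (hα : α = 1 ∨ α = -1) (hβ : β = 1 ∨ β = -1) (hγ : γ = 1 ∨ γ = -1) :
    (∀ p q r : ProjPlaneR, p ∈ Econf α β γ → q ∈ Econf α β γ → r ∈ Econf α β γ →
      p ≠ q → p ≠ r → q ≠ r →
      (ProjCollinear {p, q, r} ↔
        (({p, q, r} : Set ProjPlaneR) = {V₁, S₁, S₅} ∨
         ({p, q, r} : Set ProjPlaneR) = {V₁, S₂, S₁₄ γ} ∨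
         ({p, q, r} : Set ProjPlaneR) = {V₁, S₃, S₆ α} ∨
         ({p, q, r} : Set ProjPlaneR) = {V₁, S₄, S₉ β} ∨
         ({p, q, r} : Set ProjPlaneR) = {V₁, S₇ α, S₈ α} ∨
         ({p, q, r} : Set ProjPlaneR) = {V₁, S₁₀ β, S₁₁ β} ∨
         ({p, q, r} : Set ProjPlaneR) = {V₁, S₁₂ γ, S₁₃ γ} ∨
         ({p, q, r} : Set ProjPlaneR) = {V₂, S₁, S₄} ∨
         ({p, q, r} : Set ProjPlaneR) = {V₂, S₂, S₁₁ β} ∨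
         ({p, q, r} : Set ProjPlaneR) = {V₂, S₃, S₇ α} ∨
         ({p, q, r} : Set ProjPlaneR) = {V₂, S₅, S₁₃ γ} ∨
         ({p, q, r} : Set ProjPlaneR) = {V₂, S₆ α, S₈ α} ∨
         ({p, q, r} : Set ProjPlaneR) = {V₂, S₉ β, S₁₀ β} ∨
         ({p, q, r} : Set ProjPlaneR) = {V₂, S₁₂ γ, S₁₄ γ} ∨
         ({p, q, r} : Set ProjPlaneR) = {V₃, S₁, S₈ α} ∨
         ({p, q, r} : Set ProjPlaneR) = {V₃, S₂, S₃} ∨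
         ({p, q, r} : Set ProjPlaneR) = {V₃, S₄, S₁₀ β} ∨
         ({p, q, r} : Set ProjPlaneR) = {V₃, S₅, S₁₂ γ} ∨
         ({p, q, r} : Set ProjPlaneR) = {V₃, S₆ α, S₇ α} ∨
         ({p, q, r} : Set ProjPlaneR) = {V₃, S₉ β, S₁₁ β} ∨
         ({p, q, r} : Set ProjPlaneR) = {V₃, S₁₃ γ, S₁₄ γ}))) ∧
    (∀ f : ProjPlaneR → ProjPlaneR,
      Set.BijOn f (Econf α β γ) (Econf α β γ) →
      (∀ p ∈ Econf α β γ, ∀ q ∈ Econf α β γ, ∀ r ∈ Econf α β γ,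
        (ProjCollinear {p, q, r} ↔ ProjCollinear {f p, f q, f r})) →
      f '' ({V₁, V₂, V₃} : Set ProjPlaneR) = {V₁, V₂, V₃}) := by
  obtain ⟨a, ha, rfl⟩ := Int.exists_cast_eq_of_eq_one_or_eq_neg_one hα
  obtain ⟨b, hb, rfl⟩ := Int.exists_cast_eq_of_eq_one_or_eq_neg_one hβ
  obtain ⟨c, hc, rfl⟩ := Int.exists_cast_eq_of_eq_one_or_eq_neg_one hγ
  refine ⟨fun p q r hp hq hr hpq hpr hqr => ?_,
    fun f hf hcol => Econf.image_triangle_eq_of_bijOn ha hb hc hf hcol⟩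
  rw [← Econf.range_point] at hp hq hr
  obtain ⟨i, rfl⟩ := hp
  obtain ⟨j, rfl⟩ := hq
  obtain ⟨k, rfl⟩ := hr
  have hij : i ≠ j := ne_of_apply_ne _ hpq
  have hik : i ≠ k := ne_of_apply_ne _ hpr
  have hjk : j ≠ k := ne_of_apply_ne _ hqr
  rw [Econf.projCollinear_point_iff ha hb hc hij hik hjk,
    Econf.onCommonLine_iff_exists_image ha hb hc hij hik hjk]
  simp [Econf.lines, image_insert_eq, Econf.point]

end
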